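/- Let ϕ = (1+√5)/2 be the golden ratio. Let f : ℤ_{≥1} → ℂ be an arithmetic function and A > 0 a real number such that |f(n)| ≪ n^{ϕ−1}·(log(e·n))^{−A} for all n ≥ 1. Then ∑_{n ≤ x} f(⌊x/n⌋) = x·∑_{n=1}^∞ f(n)/(n(n+1)) + O(x·(log x)^{−A(ϕ−1)}) as x → ∞; in particular the series ∑_{n=1}^∞ f(n)/(n(n+1)) converges absolutely. -/

import Mathlib

open Finset Real Filter Asymptotics

/-!
Since `log (e n) ≥ 1`, the hypothesis gives `‖f n‖ ≤ B n ^ g` with `g = ϕ - 1 < 1`.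
Put `M = ⌊x⌋` and `K = ⌊√x⌋`, so that `⌊x / n⌋ = M / n`. The `n` with `M / n > K` satisfy
`n ≤ K` and contribute `≪ ∑_{n ≤ √x} (x / n) ^ g ≪ x ^ ((1 + g) / 2)`. The other terms are grouped
by the value `m = M / n ≤ K`, which is taken `⌊x / m⌋ - ⌊x / (m + 1)⌋ = x / (m (m + 1)) + O(1)`
times; this gives `x ∑_{m ≤ K} f m / (m (m + 1)) + O(K ^ (1 + g))`, while the missing tail
`x ∑_{m > K}` of the series is `≪ x K ^ (g - 1)`. So the error is `O(x ^ ((1 + g) / 2))`,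
which is `O(x (log x) ^ (-c))` for every `c`.
-/

/-- The golden ratio `ϕ = (1 + √5)/2`. -/
noncomputable def goldenRatio' : ℝ := (1 + Real.sqrt 5) / 2

theorem sum_Icc_rpow_neg_le {p : ℝ} (hp₀ : 0 ≤ p) (hp₁ : p < 1) (N : ℕ) :
    ∑ n ∈ Icc 1 N, (n : ℝ) ^ (-p) ≤ 1 + (N : ℝ) ^ (1 - p) / (1 - p) := by
  rcases N.eq_zero_or_pos with rfl | hN
  · simp [zero_rpow (by linarith : 1 - p ≠ 0)]
  have hanti : AntitoneOn (fun t : ℝ => t ^ (-p)) (Set.Icc (1 : ℕ) N) :=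
    fun s hs t _ hst => rpow_le_rpow_of_nonpos (zero_lt_one.trans_le (by simpa using hs.1)) hst
      (by linarith)
  have hint := hanti.sum_le_integral_Ico hN
  rw [integral_rpow (Or.inl (by linarith)), Nat.cast_one, one_rpow, neg_add_eq_sub] at hint
  have : ((N : ℝ) ^ (1 - p) - 1) / (1 - p) ≤ (N : ℝ) ^ (1 - p) / (1 - p) := by
    gcongr; linarith
  rw [← Ico_add_one_right_eq_Icc, sum_eq_sum_Ico_succ_bot (by omega), ← sum_Ico_add']
  push_cast at hint ⊢
  linarith [one_rpow (-p)]

theorem filter_div_eq_eq_Ioc {M m : ℕ} (hm : 0 < m) :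
    {n ∈ Icc 1 M | M / n = m} = Ioc (M / (m + 1)) (M / m) := by
  ext n
  simp only [mem_filter, mem_Icc, mem_Ioc, Nat.div_lt_iff_lt_mul (Nat.succ_pos m),
    Nat.le_div_iff_mul_le hm]
  constructor
  · rintro ⟨⟨hn, -⟩, rfl⟩
    exact ⟨Nat.lt_mul_div_succ M hn, Nat.mul_div_le M n⟩
  · rintro ⟨hlt, hle⟩
    refine ⟨⟨Nat.pos_of_ne_zero ?_, (Nat.le_mul_of_pos_right n hm).trans hle⟩, ?_⟩
    · rintro rfl; simp at hlt
    · exact Nat.div_eq_of_lt_le (by rwa [mul_comm]) (by rwa [mul_comm])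

theorem card_filter_div_eq {M m : ℕ} (hm : 0 < m) :
    #{n ∈ Icc 1 M | M / n = m} = M / m - M / (m + 1) := by
  rw [filter_div_eq_eq_Ioc hm, Nat.card_Ioc]

theorem sum_Icc_div_eq_add {R : Type*} [AddCommMonoid R] (f : ℕ → R) (M K : ℕ) :
    ∑ n ∈ Icc 1 M, f (M / n) =
      ∑ n ∈ Icc 1 M with K < M / n, f (M / n) + ∑ m ∈ Icc 1 K, (M / m - M / (m + 1)) • f m := by
  rw [← sum_filter_add_sum_filter_not (Icc 1 M) (fun n => K < M / n)]
  congr 1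
  have hmaps : ∀ n ∈ {n ∈ Icc 1 M | ¬K < M / n}, M / n ∈ Icc 1 K := by
    simp only [mem_filter, mem_Icc, not_lt]
    exact fun n ⟨⟨hn, hnM⟩, hK⟩ => ⟨Nat.div_pos hnM hn, hK⟩
  rw [← sum_fiberwise_of_maps_to hmaps]
  refine sum_congr rfl fun m hm => ?_
  have hm0 : 0 < m := (mem_Icc.1 hm).1
  rw [filter_filter, sum_congr rfl fun n hn => by rw [(mem_filter.1 hn).2.2], sum_const,
    ← card_filter_div_eq hm0]
  congr 2
  exact filter_congr fun n _ => ⟨And.right, fun h => ⟨by grind, h⟩⟩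

theorem tsum_rpow_nat_add_le {p : ℝ} (hp : p < -1) {N : ℕ} (hN : 0 < N) :
    ∑' n : ℕ, ((n + N + 1 : ℕ) : ℝ) ^ p ≤ -(N : ℝ) ^ (p + 1) / (p + 1) := by
  have hN' : (0 : ℝ) < N := by exact_mod_cast hN
  refine (AntitoneOn.tsum_comp_add_le_integral N ?_ (integrableOn_Ioi_rpow_of_lt hp hN')
    fun t ht => ?_).trans_eq (integral_Ioi_rpow_of_lt hp hN')
  · exact fun s hs t _ hst => rpow_le_rpow_of_nonpos (hN'.trans_le hs) hst (by linarith)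
  · exact rpow_nonneg (hN'.trans ht).le p

theorem summable_rpow_nat_add {p : ℝ} (hp : p < -1) (N : ℕ) :
    Summable fun n : ℕ => ((n + N : ℕ) : ℝ) ^ p :=
  (summable_nat_add_iff N).2 (summable_nat_rpow.2 hp)

theorem norm_div_natCast_add_one_mul_add_two (z : ℂ) (n : ℕ) :
    ‖z / (((n : ℂ) + 1) * ((n : ℂ) + 2))‖ = ‖z‖ / (((n : ℝ) + 1) * ((n : ℝ) + 2)) := by
  rw [norm_div, norm_mul]
  norm_cast

theorem abs_floor_div_sub_floor_div_succ_sub_le {x : ℝ} (hx : 0 ≤ x) {m : ℕ} (hm : 0 < m) :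
    |((⌊x⌋₊ / m - ⌊x⌋₊ / (m + 1) : ℕ) : ℝ) - x / (m * (m + 1))| ≤ 1 := by
  have hm' : (0 : ℝ) < m := by exact_mod_cast hm
  rw [← Nat.floor_div_natCast, ← Nat.floor_div_natCast, Nat.cast_sub, Nat.cast_add_one,
    show x / (m * (m + 1)) = x / m - x / (m + 1) by field_simp; ring, abs_le]
  · have := Nat.floor_le (div_nonneg hx hm'.le)
    have := Nat.floor_le (div_nonneg hx (by positivity : (0 : ℝ) ≤ m + 1))
    have := Nat.lt_floor_add_one (x / m)
    have := Nat.lt_floor_add_one (x / (m + 1))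
    constructor <;> linarith
  · exact Nat.floor_le_floor (div_le_div_of_nonneg_left hx (by positivity) (by simp))

section
variable {f : ℕ → ℂ} {B g : ℝ}

theorem nonneg_of_norm_le_mul_rpow (hf : ∀ n, 1 ≤ n → ‖f n‖ ≤ B * n ^ g) : 0 ≤ B := by
  simpa using (norm_nonneg _).trans (hf 1 le_rfl)

theorem norm_div_succ_mul_succ_le (hf : ∀ n, 1 ≤ n → ‖f n‖ ≤ B * n ^ g) (n : ℕ) :
    ‖f (n + 1)‖ / (((n : ℝ) + 1) * ((n : ℝ) + 2)) ≤ B * ((n + 1 : ℕ) : ℝ) ^ (g - 2) := by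
  have hn : (0 : ℝ) < (n + 1 : ℕ) := by positivity
  have hfn := hf (n + 1) (by omega)
  rw [rpow_sub hn, rpow_two, ← mul_div_assoc]
  push_cast at hfn ⊢
  gcongr
  · exact (norm_nonneg _).trans hfn
  · linarith

theorem summable_norm_div_succ_mul_succ (hg : g < 1) (hf : ∀ n, 1 ≤ n → ‖f n‖ ≤ B * n ^ g) :
    Summable fun n : ℕ => ‖f (n + 1)‖ / (((n : ℝ) + 1) * ((n : ℝ) + 2)) :=
  ((summable_rpow_nat_add (by linarith) 1).mul_left B).of_nonneg_of_le (fun _ => by positivity)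
    (norm_div_succ_mul_succ_le hf)

theorem norm_sum_filter_lt_div_le (hg₀ : 0 ≤ g) (hg₁ : g < 1)
    (hf : ∀ n, 1 ≤ n → ‖f n‖ ≤ B * n ^ g) {x : ℝ} (hx : 1 ≤ x) {M K : ℕ} (hM : (M : ℝ) ≤ x)
    (hK : (K : ℝ) ≤ √x) (hMK : M < (K + 1) ^ 2) :
    ‖∑ n ∈ Icc 1 M with K < M / n, f (M / n)‖ ≤ B * (1 + 1 / (1 - g)) * x ^ ((1 + g) / 2) := by
  have hB := nonneg_of_norm_le_mul_rpow hf
  have hx₀ : 0 ≤ x := by linarith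
  have hterm : ∀ n ∈ {n ∈ Icc 1 M | K < M / n}, ‖f (M / n)‖ ≤ B * x ^ g * (n : ℝ) ^ (-g) := by
    intro n hn
    simp only [mem_filter, mem_Icc] at hn
    have hn₀ : (0 : ℝ) < n := by exact_mod_cast hn.1.1
    have hMn : ((M / n : ℕ) : ℝ) ≤ x / n :=
      Nat.cast_div_le.trans (div_le_div_of_nonneg_right hM hn₀.le)
    calc ‖f (M / n)‖ ≤ B * ((M / n : ℕ) : ℝ) ^ g := hf _ (by omega)
      _ ≤ B * (x / n) ^ g := by gcongr
      _ = B * x ^ g * (n : ℝ) ^ (-g) := by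
        rw [div_rpow hx₀ hn₀.le, rpow_neg hn₀.le, mul_assoc, div_eq_mul_inv]
  have hsub : {n ∈ Icc 1 M | K < M / n} ⊆ Icc 1 K := by
    intro n hn
    simp only [mem_filter, mem_Icc] at hn ⊢
    refine ⟨hn.1.1, Nat.lt_succ_iff.1 (Nat.lt_of_mul_lt_mul_left (a := K + 1) ?_)⟩
    calc (K + 1) * n ≤ M / n * n := Nat.mul_le_mul_right n hn.2
      _ ≤ M := Nat.div_mul_le_self M n
      _ < (K + 1) * (K + 1) := by rwa [← sq]
  have hKx : x ^ g * (K : ℝ) ^ (1 - g) ≤ x ^ ((1 + g) / 2) := by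
    calc x ^ g * (K : ℝ) ^ (1 - g) ≤ x ^ g * √x ^ (1 - g) := by gcongr
      _ = x ^ ((1 + g) / 2) := by
        rw [sqrt_eq_rpow, ← rpow_mul hx₀, ← rpow_add (by linarith)]; ring_nf
  have hxg : x ^ g ≤ x ^ ((1 + g) / 2) := rpow_le_rpow_of_exponent_le hx (by linarith)
  calc ‖∑ n ∈ Icc 1 M with K < M / n, f (M / n)‖
      ≤ ∑ n ∈ Icc 1 M with K < M / n, B * x ^ g * (n : ℝ) ^ (-g) := norm_sum_le_of_le _ hterm
    _ ≤ ∑ n ∈ Icc 1 K, B * x ^ g * (n : ℝ) ^ (-g) :=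
      sum_le_sum_of_subset_of_nonneg hsub fun _ _ _ => by positivity
    _ = B * x ^ g * ∑ n ∈ Icc 1 K, (n : ℝ) ^ (-g) := (mul_sum ..).symm
    _ ≤ B * x ^ g * (1 + (K : ℝ) ^ (1 - g) / (1 - g)) := by
      gcongr; exact sum_Icc_rpow_neg_le hg₀ hg₁ K
    _ = B * (x ^ g + x ^ g * (K : ℝ) ^ (1 - g) / (1 - g)) := by ring
    _ ≤ B * (x ^ ((1 + g) / 2) + x ^ ((1 + g) / 2) / (1 - g)) := by
      gcongr
    _ = B * (1 + 1 / (1 - g)) * x ^ ((1 + g) / 2) := by ring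

theorem norm_sum_smul_sub_mul_sum_le (hg₀ : 0 ≤ g) (hf : ∀ n, 1 ≤ n → ‖f n‖ ≤ B * n ^ g)
    {x : ℝ} (hx : 0 ≤ x) {K : ℕ} (hK : (K : ℝ) ≤ √x) :
    ‖∑ m ∈ Icc 1 K, (⌊x⌋₊ / m - ⌊x⌋₊ / (m + 1)) • f m -
        x * ∑ n ∈ range K, f (n + 1) / (((n : ℂ) + 1) * ((n : ℂ) + 2))‖ ≤
      B * x ^ ((1 + g) / 2) := by
  have hB := nonneg_of_norm_le_mul_rpow hf
  rw [← Ico_add_one_right_eq_Icc, sum_Ico_eq_sum_range, Nat.add_sub_cancel, mul_sum,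
    ← sum_sub_distrib]
  have hterm : ∀ n ∈ range K,
      ‖(⌊x⌋₊ / (1 + n) - ⌊x⌋₊ / (1 + n + 1)) • f (1 + n) -
          x * (f (n + 1) / (((n : ℂ) + 1) * ((n : ℂ) + 2)))‖ ≤ B * (K : ℝ) ^ g := by
    intro n hn
    have hcount := abs_floor_div_sub_floor_div_succ_sub_le hx (Nat.succ_pos n)
    rw [add_comm 1 n, nsmul_eq_mul, mul_div_assoc', mul_div_right_comm, ← sub_mul, norm_mul]
    calc _ ≤ 1 * (B * ((n + 1 : ℕ) : ℝ) ^ g) := by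
          gcongr
          · push_cast at hcount ⊢
            rw [show (n : ℝ) + 1 + 1 = n + 2 by ring] at hcount
            exact_mod_cast hcount
          · exact hf _ (by omega)
      _ ≤ B * (K : ℝ) ^ g := by
          rw [one_mul]; gcongr; exact_mod_cast mem_range.1 hn
  calc _ ≤ ∑ n ∈ range K, B * (K : ℝ) ^ g := norm_sum_le_of_le _ hterm
    _ = B * ((K : ℝ) * (K : ℝ) ^ g) := by simp; ring
    _ ≤ B * √x ^ (1 + g) := by
      rw [← rpow_one_add' (Nat.cast_nonneg K) (by linarith)]; gcongr
    _ = B * x ^ ((1 + g) / 2) := by rw [sqrt_eq_rpow, ← rpow_mul hx]; ring_nf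

theorem norm_mul_tsum_nat_add_le (hg₁ : g < 1) (hf : ∀ n, 1 ≤ n → ‖f n‖ ≤ B * n ^ g)
    {x : ℝ} (hx : 0 < x) {K : ℕ} (hK₀ : 0 < K) (hK : √x ≤ 2 * K) :
    ‖x * ∑' i : ℕ, f (i + K + 1) / ((((i + K : ℕ) : ℂ) + 1) * (((i + K : ℕ) : ℂ) + 2))‖ ≤
      B * 2 ^ (1 - g) / (1 - g) * x ^ ((1 + g) / 2) := by
  have hB := nonneg_of_norm_le_mul_rpow hf
  have htail : ‖∑' i : ℕ, f (i + K + 1) / ((((i + K : ℕ) : ℂ) + 1) * (((i + K : ℕ) : ℂ) + 2))‖ ≤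
      B * ∑' i : ℕ, ((i + K + 1 : ℕ) : ℝ) ^ (g - 2) := by
    rw [← tsum_mul_left]
    refine tsum_of_norm_bounded ((summable_rpow_nat_add (by linarith) (K + 1)).mul_left B).hasSum
      fun i => ?_
    rw [norm_div_natCast_add_one_mul_add_two]
    exact norm_div_succ_mul_succ_le hf (i + K)
  have hKx : (K : ℝ) ^ (g - 1) ≤ 2 ^ (1 - g) * √x ^ (g - 1) := by
    calc (K : ℝ) ^ (g - 1) ≤ (√x / 2) ^ (g - 1) :=
          rpow_le_rpow_of_nonpos (by positivity) (by linarith) (by linarith)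
      _ = 2 ^ (1 - g) * √x ^ (g - 1) := by
          rw [div_rpow (sqrt_nonneg x) zero_le_two, div_eq_mul_inv, ← rpow_neg zero_le_two,
            neg_sub, mul_comm]
  have hsx : x * √x ^ (g - 1) = x ^ ((1 + g) / 2) := by
    rw [sqrt_eq_rpow, ← rpow_mul hx.le, mul_comm, ← rpow_add_one hx.ne']; ring_nf
  rw [norm_mul, Complex.norm_real, norm_of_nonneg hx.le]
  calc x * ‖_‖ ≤ x * (B * (-(K : ℝ) ^ (g - 2 + 1) / (g - 2 + 1))) := by
        gcongr
        exact htail.trans (by gcongr; exact tsum_rpow_nat_add_le (by linarith) hK₀)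
    _ = B / (1 - g) * (x * (K : ℝ) ^ (g - 1)) := by
        rw [show g - 2 + 1 = g - 1 by ring, neg_div, ← div_neg, neg_sub]; ring
    _ ≤ B / (1 - g) * (x * (2 ^ (1 - g) * √x ^ (g - 1))) := by
        have : 0 < 1 - g := by linarith
        gcongr
    _ = B * 2 ^ (1 - g) / (1 - g) * x ^ ((1 + g) / 2) := by
        rw [← hsx]; ring

theorem norm_sum_floor_div_sub_le (hg₀ : 0 ≤ g) (hg₁ : g < 1)
    (hf : ∀ n, 1 ≤ n → ‖f n‖ ≤ B * n ^ g) {x : ℝ} (hx : 1 ≤ x) :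
    ‖(∑ n ∈ Icc 1 ⌊x⌋₊, f ⌊x / (n : ℝ)⌋₊) -
        x * ∑' n : ℕ, f (n + 1) / (((n : ℂ) + 1) * ((n : ℂ) + 2))‖ ≤
      B * (2 + (1 + 2 ^ (1 - g)) / (1 - g)) * x ^ ((1 + g) / 2) := by
  have hx₀ : 0 < x := by linarith
  set M := ⌊x⌋₊
  set K := ⌊√x⌋₊
  have hKx : (K : ℝ) ≤ √x := Nat.floor_le (sqrt_nonneg x)
  have hxK : √x < K + 1 := Nat.lt_floor_add_one _
  have hK₀ : 0 < K := Nat.floor_pos.2 (one_le_sqrt.2 hx)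
  have hxK' : √x ≤ 2 * K := by linarith [show (1 : ℝ) ≤ K by exact_mod_cast hK₀]
  have hMK : M < (K + 1) ^ 2 := by
    have : x < (((K + 1) ^ 2 : ℕ) : ℝ) := by
      push_cast; exact (sqrt_lt' (by positivity)).1 hxK
    exact (Nat.floor_lt hx₀.le).2 this
  have hsummable : Summable fun n : ℕ => f (n + 1) / (((n : ℂ) + 1) * ((n : ℂ) + 2)) :=
    Summable.of_norm <| by
      simpa only [norm_div_natCast_add_one_mul_add_two] using summable_norm_div_succ_mul_succ hg₁ hf
  simp_rw [Nat.floor_div_natCast]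
  rw [sum_Icc_div_eq_add f M K, ← hsummable.sum_add_tsum_nat_add K, mul_add]
  calc _ = ‖∑ n ∈ Icc 1 M with K < M / n, f (M / n) +
          (∑ m ∈ Icc 1 K, (M / m - M / (m + 1)) • f m -
            x * ∑ n ∈ range K, f (n + 1) / (((n : ℂ) + 1) * ((n : ℂ) + 2))) -
          x * ∑' i : ℕ, f (i + K + 1) / ((((i + K : ℕ) : ℂ) + 1) * (((i + K : ℕ) : ℂ) + 2))‖ := by
        congr 1; ring
    _ ≤ B * (1 + 1 / (1 - g)) * x ^ ((1 + g) / 2) + B * x ^ ((1 + g) / 2) +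
          B * 2 ^ (1 - g) / (1 - g) * x ^ ((1 + g) / 2) := by
        refine (norm_sub_le _ _).trans (add_le_add ((norm_add_le _ _).trans (add_le_add ?_ ?_)) ?_)
        · exact norm_sum_filter_lt_div_le hg₀ hg₁ hf hx (Nat.floor_le hx₀.le) hKx hMK
        · exact norm_sum_smul_sub_mul_sum_le hg₀ hf hx₀.le hKx
        · exact norm_mul_tsum_nat_add_le hg₁ hf hx₀ hK₀ hxK'
    _ = B * (2 + (1 + 2 ^ (1 - g)) / (1 - g)) * x ^ ((1 + g) / 2) := by ring

end

theorem rpow_isBigO_mul_log_rpow {a : ℝ} (ha : a < 1) (c : ℝ) :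
    (fun x : ℝ => x ^ a) =O[atTop] fun x => x * log x ^ (-c) := by
  have h := ((isLittleO_log_rpow_rpow_atTop c (sub_pos.2 ha)).isBigO).mul
    (isBigO_refl (fun x : ℝ => x ^ a * log x ^ (-c)) atTop)
  refine h.congr' ?_ ?_ <;> filter_upwards [eventually_gt_atTop 1] with x hx
  · have hlog := log_pos hx
    rw [mul_left_comm, ← rpow_add hlog, add_neg_cancel, rpow_zero, mul_one]
  · have hx₀ : 0 < x := by linarith
    rw [← mul_assoc, ← rpow_add hx₀, sub_add_cancel, rpow_one]

theorem sum_f_floor_div_golden (f : ℕ → ℂ) (A : ℝ) (hA : 0 < A)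
    (hf : ∃ B : ℝ, 0 < B ∧ ∀ n : ℕ, 1 ≤ n →
      ‖f n‖ ≤ B * (n : ℝ) ^ (goldenRatio' - 1) * Real.log (Real.exp 1 * n) ^ (-A)) :
    Summable (fun n : ℕ => ‖f (n + 1)‖ / (((n : ℝ) + 1) * ((n : ℝ) + 2))) ∧
    ∃ C : ℝ, 0 < C ∧ ∃ x₀ : ℝ, ∀ x : ℝ, x₀ ≤ x →
      ‖(∑ n ∈ Finset.Icc 1 ⌊x⌋₊, f ⌊x / (n : ℝ)⌋₊) -
          (x : ℂ) * ∑' n : ℕ, f (n + 1) / ((((n : ℕ) : ℂ) + 1) * (((n : ℕ) : ℂ) + 2))‖ ≤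
        C * x * Real.log x ^ (-(A * (goldenRatio' - 1))) := by
  obtain ⟨B, hB, hfB⟩ := hf
  set g := goldenRatio' - 1
  have hg₀ : 0 < g := sub_pos.2 one_lt_goldenRatio
  have hg₁ : g < 1 := by
    have : goldenRatio' < 2 := goldenRatio_lt_two
    linarith
  have hf' : ∀ n, 1 ≤ n → ‖f n‖ ≤ B * n ^ g := fun n hn => by
    have hlog : 1 ≤ log (exp 1 * n) := by
      rw [log_mul (exp_pos 1).ne' (by positivity), log_exp]
      linarith [log_nonneg (show (1 : ℝ) ≤ n by exact_mod_cast hn)]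
    exact (hfB n hn).trans <| mul_le_of_le_one_right (by positivity) <|
      rpow_le_one_of_one_le_of_nonpos hlog (by linarith)
  refine ⟨summable_norm_div_succ_mul_succ hg₁ hf', ?_⟩
  have hO : (fun x : ℝ => (∑ n ∈ Icc 1 ⌊x⌋₊, f ⌊x / (n : ℝ)⌋₊) -
      x * ∑' n : ℕ, f (n + 1) / (((n : ℂ) + 1) * ((n : ℂ) + 2))) =O[atTop]
      fun x => x ^ ((1 + g) / 2) :=
    isBigO_iff.2 ⟨_, (eventually_ge_atTop 1).mono fun x hx => by
      rw [norm_of_nonneg (rpow_nonneg (by linarith) _)]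
      exact norm_sum_floor_div_sub_le hg₀.le hg₁ hf' hx⟩
  obtain ⟨C, hC, hCO⟩ := (hO.trans (rpow_isBigO_mul_log_rpow (by linarith) (A * g))).exists_pos
  obtain ⟨x₀, hx₀⟩ := eventually_atTop.1 (hCO.bound.and (eventually_gt_atTop 1))
  refine ⟨C, hC, x₀, fun x hx => ?_⟩
  obtain ⟨hbound, hx₁⟩ := hx₀ x hx
  rwa [norm_of_nonneg (mul_nonneg (by linarith) (rpow_nonneg (log_nonneg hx₁.le) _)),
    ← mul_assoc] at hbound
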